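/- Suppose the shared view lies in the columns: let V_i ∈ ℝ^{p_i×k}, V_j ∈ ℝ^{p_j×k}, V_k ∈ ℝ^{p_k×k} have orthonormal columns, let D_{ji}, D_{ki} ∈ ℝ^{k×k} be diagonal, and set Y_{ji} = V_j D_{ji} V_i^⊤ and Y_{ki} = V_k D_{ki} V_i^⊤. Then the coefficient B = V_k D_{ki}^+ D_{ji} V_j^⊤ solves the normal equations of the regression Y_{ji}^⊤ = Y_{ki}^⊤ B, i.e., (Y_{ki}^⊤)^⊤ Y_{ki}^⊤ B = (Y_{ki}^⊤)^⊤ Y_{ji}^⊤, and the fitted values satisfy Y_{ki}^⊤ B = V_i J_{ki} D_{ji} V_j^⊤ with ‖Y_{ki}^⊤ B‖_F² = Σ_{l=1}^{k} J_{ki}^{(l,l)} (D_{ji}^{(l,l)})², recovering the same directed R² formula as in the row-shared case. -/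
import Mathlib


open Matrix

/-- Squared Frobenius norm of a real matrix. -/
noncomputable def frobSq {m n : ℕ} (A : Matrix (Fin m) (Fin n) ℝ) : ℝ :=
  ∑ i, ∑ j, (A i j) ^ 2

/-- Pseudo-inverse of a diagonal matrix given by the diagonal vector `d`:
each nonzero diagonal entry is inverted and zero entries stay zero. -/
noncomputable def diagPinv {k : ℕ} (d : Fin k → ℝ) : Matrix (Fin k) (Fin k) ℝ :=
  Matrix.diagonal fun l => (d l)⁻¹

/-- The diagonal 0–1 matrix with `1` exactly at the nonzero entries of `d`. -/
noncomputable def diagSupp {k : ℕ} (d : Fin k → ℝ) : Matrix (Fin k) (Fin k) ℝ :=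
  Matrix.diagonal fun l => if d l ≠ 0 then 1 else 0

/-- The 0–1 indicator of the nonzero entries of `d`. -/
noncomputable def supp {k : ℕ} (d : Fin k → ℝ) : Fin k → ℝ :=
  fun l => if d l ≠ 0 then 1 else 0

lemma frobSq_eq_trace {m n : ℕ} (A : Matrix (Fin m) (Fin n) ℝ) :
    frobSq A = (Aᵀ * A).trace := by
  rw [Matrix.trace, frobSq, Finset.sum_comm]
  simp [Matrix.mul_apply, sq]

/-- Shared view in the columns: with `Y_{ji} = Vj D_{ji} Viᵀ`,
`Y_{ki} = Vk D_{ki} Viᵀ` and `B = Vk D_{ki}⁺ D_{ji} Vjᵀ`, the coefficient `B`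
solves the normal equations `(Y_{ki}ᵀ)ᵀ Y_{ki}ᵀ B = (Y_{ki}ᵀ)ᵀ Y_{ji}ᵀ` of the
transposed regression, the fitted values satisfy
`Y_{ki}ᵀ B = Vi J_{ki} D_{ji} Vjᵀ`, and
`‖Y_{ki}ᵀ B‖_F² = ∑ l, J_{ki}^{(l,l)} (D_{ji}^{(l,l)})²`. -/
theorem column_shared_view_regression {pi pj pk k : ℕ}
    (Vi : Matrix (Fin pi) (Fin k) ℝ) (Vj : Matrix (Fin pj) (Fin k) ℝ)
    (Vk : Matrix (Fin pk) (Fin k) ℝ)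
    (dji dki : Fin k → ℝ)
    (hVi : Viᵀ * Vi = 1) (hVj : Vjᵀ * Vj = 1) (hVk : Vkᵀ * Vk = 1) :
    (((Vk * Matrix.diagonal dki * Viᵀ)ᵀ)ᵀ * (Vk * Matrix.diagonal dki * Viᵀ)ᵀ
        * (Vk * diagPinv dki * Matrix.diagonal dji * Vjᵀ)
      = ((Vk * Matrix.diagonal dki * Viᵀ)ᵀ)ᵀ * (Vj * Matrix.diagonal dji * Viᵀ)ᵀ) ∧
    ((Vk * Matrix.diagonal dki * Viᵀ)ᵀ
        * (Vk * diagPinv dki * Matrix.diagonal dji * Vjᵀ)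
      = Vi * diagSupp dki * Matrix.diagonal dji * Vjᵀ) ∧
    (frobSq ((Vk * Matrix.diagonal dki * Viᵀ)ᵀ
        * (Vk * diagPinv dki * Matrix.diagonal dji * Vjᵀ))
      = ∑ l, supp dki l * (dji l) ^ 2) := by
  have hVk' : ∀ {n : ℕ} (X : Matrix (Fin k) (Fin n) ℝ), Vkᵀ * (Vk * X) = X := by
    intro n X; rw [← Matrix.mul_assoc, hVk, Matrix.one_mul]
  have hVi' : ∀ {n : ℕ} (X : Matrix (Fin k) (Fin n) ℝ), Viᵀ * (Vi * X) = X := by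
    intro n X; rw [← Matrix.mul_assoc, hVi, Matrix.one_mul]
  have hDP : Matrix.diagonal dki * diagPinv dki = diagSupp dki := by
    rw [diagPinv, diagSupp, Matrix.diagonal_mul_diagonal]
    have : (fun l => dki l * (dki l)⁻¹) = fun l => if dki l ≠ 0 then (1:ℝ) else 0 := by
      funext l; by_cases h : dki l = 0 <;> simp [h, mul_inv_cancel₀]
    rw [this]
  have hDJ : Matrix.diagonal dki * diagSupp dki = Matrix.diagonal dki := by
    rw [diagSupp, Matrix.diagonal_mul_diagonal]
    have : (fun l => dki l * if dki l ≠ 0 then (1:ℝ) else 0) = dki := by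
      funext l; by_cases h : dki l = 0 <;> simp [h]
    rw [this]
  have hJt : (diagSupp dki)ᵀ = diagSupp dki := by
    rw [diagSupp, Matrix.diagonal_transpose]
  have hfit : (Vk * Matrix.diagonal dki * Viᵀ)ᵀ
        * (Vk * diagPinv dki * Matrix.diagonal dji * Vjᵀ)
      = Vi * diagSupp dki * Matrix.diagonal dji * Vjᵀ := by
    simp only [Matrix.transpose_mul, Matrix.transpose_transpose,
      Matrix.diagonal_transpose, Matrix.mul_assoc]
    rw [hVk', ← Matrix.mul_assoc (Matrix.diagonal dki), hDP]
  refine ⟨?_, hfit, ?_⟩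
  · rw [Matrix.transpose_transpose, Matrix.mul_assoc, hfit]
    simp only [Matrix.transpose_mul, Matrix.transpose_transpose,
      Matrix.diagonal_transpose, Matrix.mul_assoc]
    rw [hVi', hVi', ← Matrix.mul_assoc (Matrix.diagonal dki), hDJ]
  · rw [hfit, frobSq_eq_trace]
    simp only [Matrix.transpose_mul, Matrix.transpose_transpose,
      Matrix.diagonal_transpose, hJt, Matrix.mul_assoc]
    rw [hVi']
    have hcomb : Matrix.diagonal dji * (diagSupp dki * (diagSupp dki
          * (Matrix.diagonal dji * Vjᵀ)))
        = Matrix.diagonal (fun l => supp dki l * dji l ^ 2) * Vjᵀ := by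
      simp only [diagSupp, ← Matrix.mul_assoc, Matrix.diagonal_mul_diagonal]
      have : (fun l => dji l * ((if dki l ≠ 0 then (1:ℝ) else 0)
            * ((if dki l ≠ 0 then 1 else 0) * dji l)))
          = fun l => supp dki l * dji l ^ 2 := by
        funext l; by_cases h : dki l = 0 <;> simp [supp, h] <;> ring
      rw [this]
    rw [hcomb, ← Matrix.mul_assoc, Matrix.trace_mul_cycle,
      hVj, Matrix.one_mul, Matrix.trace_diagonal]
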